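/- Fix i ∈ {1,…,2m} and j ∈ {1,…,n}, suppose g↑ ∩ T_ij ≠ ∅ and let r* be the constant value of r↑ on g↑ ∩ T_ij. (a) If g↑ ∩ R_ij = ∅, then r↑(u,v) = r* for all (u,v) ∈ g↑ ∩ LB_ij. (b) If g↑ ∩ R_ij = {i}×[a,b] is nonempty, then for every (i−1,v) ∈ g↑ ∩ L_ij: r↑(i−1,v) = r* if v > b; r↑(i−1,v) = r↑(i,v) if a < v ≤ b; r↑(i−1,v) = r↑(i,a) if v ≤ a; and r↑(u,j−1) = r↑(i,a) for every (u,j−1) ∈ g↑ ∩ B_ij. -/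

import Mathlib

open Set

noncomputable section

/-- The piecewise linear closed curve through the vertices `x 0, x 1, …`:
`f(i+α) = (1-α) • x i + α • x (i+1)`. -/
def fCurve {k : ℕ} (x : ℕ → EuclideanSpace ℝ (Fin k)) (t : ℝ) :
    EuclideanSpace ℝ (Fin k) :=
  (1 - Int.fract t) • x (⌊t⌋.toNat) + Int.fract t • x (⌊t⌋.toNat + 1)

/-- The extension of the curve from `[0,m]` to `[0,2m]` by `f(u) = f(u-m)` for `u > m`. -/
def fCurveExt {k : ℕ} (m : ℕ) (x : ℕ → EuclideanSpace ℝ (Fin k)) (u : ℝ) :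
    EuclideanSpace ℝ (Fin k) :=
  if u ≤ m then fCurve x u else fCurve x (u - m)

/-- The rectangle `D = [0,2m] × [0,n]`. -/
def Dfull (m n : ℕ) : Set (ℝ × ℝ) :=
  Icc (0:ℝ) (2*(m:ℝ)) ×ˢ Icc (0:ℝ) (n:ℝ)

/-- The free space `D_ε = {(u,v) ∈ D : dist (f_X u) (f_Y v) ≤ ε}`. -/
def Dfree {k : ℕ} (m n : ℕ) (x y : ℕ → EuclideanSpace ℝ (Fin k)) (ε : ℝ) :
    Set (ℝ × ℝ) :=
  {p ∈ Dfull m n | dist (fCurveExt m x p.1) (fCurve y p.2) ≤ ε}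

/-- The top side `T = [0,2m] × {n}` of `D`. -/
def Tside (m n : ℕ) : Set (ℝ × ℝ) := Icc (0:ℝ) (2*(m:ℝ)) ×ˢ {(n:ℝ)}

/-- The bottom side `B = [0,2m] × {0}` of `D`. -/
def Bside (m : ℕ) : Set (ℝ × ℝ) := Icc (0:ℝ) (2*(m:ℝ)) ×ˢ {(0:ℝ)}

/-- A monotone (non-decreasing) path: a connected subset `γ ⊆ Dε` with
`(u-u')·(v-v') ≥ 0` for all `(u,v), (u',v') ∈ γ`. -/
def IsMonPath (Dε γ : Set (ℝ × ℝ)) : Prop :=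
  γ ⊆ Dε ∧ IsConnected γ ∧
    ∀ p ∈ γ, ∀ q ∈ γ, (p.1 - q.1) * (p.2 - q.2) ≥ 0

/-- Two points are mutually reachable if some monotone path contains both. -/
def Reach (Dε : Set (ℝ × ℝ)) (p q : ℝ × ℝ) : Prop :=
  ∃ γ : Set (ℝ × ℝ), IsMonPath Dε γ ∧ p ∈ γ ∧ q ∈ γ

/-- `g↓`: the points of `Dε` mutually reachable with at least one point of `B`. -/
def gDown (m : ℕ) (Dε : Set (ℝ × ℝ)) : Set (ℝ × ℝ) :=
  {p ∈ Dε | ∃ q ∈ Bside m, Reach Dε p q}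

/-- `g↑`: the points of `Dε` mutually reachable with at least one point of `T`. -/
def gUp (m n : ℕ) (Dε : Set (ℝ × ℝ)) : Set (ℝ × ℝ) :=
  {p ∈ Dε | ∃ q ∈ Tside m n, Reach Dε p q}

/-- The pointer `r↑(p)`: the maximum `u* ∈ [0,2m]` such that `p` and `(u*, n)`
are mutually reachable. -/
def rUp (m n : ℕ) (Dε : Set (ℝ × ℝ)) (p : ℝ × ℝ) : ℝ :=
  sSup {u : ℝ | u ∈ Icc (0:ℝ) (2*(m:ℝ)) ∧ Reach Dε p (u, (n:ℝ))}

/-- The pointer `r↓(p)`: for `p` with `p.2 > 0`, the maximum `u* ∈ [0,2m]` such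
that `p` and `(u*, 0)` are mutually reachable; on the bottom side `r↓(u,0) = u`. -/
def rDown (m : ℕ) (Dε : Set (ℝ × ℝ)) (p : ℝ × ℝ) : ℝ :=
  if p.2 = 0 then p.1
  else sSup {u : ℝ | u ∈ Icc (0:ℝ) (2*(m:ℝ)) ∧ Reach Dε p (u, (0:ℝ))}

/-- The cell `D_ij = [i-1,i] × [j-1,j]`. -/
def cellD (i j : ℕ) : Set (ℝ × ℝ) :=
  Icc ((i:ℝ)-1) (i:ℝ) ×ˢ Icc ((j:ℝ)-1) (j:ℝ)

/-- The top side `T_ij` of the cell `D_ij`. -/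
def cellT (i j : ℕ) : Set (ℝ × ℝ) := Icc ((i:ℝ)-1) (i:ℝ) ×ˢ {(j:ℝ)}

/-- The bottom side `B_ij` of the cell `D_ij`. -/
def cellB (i j : ℕ) : Set (ℝ × ℝ) := Icc ((i:ℝ)-1) (i:ℝ) ×ˢ {((j:ℝ)-1)}

/-- The right side `R_ij` of the cell `D_ij`. -/
def cellR (i j : ℕ) : Set (ℝ × ℝ) := {(i:ℝ)} ×ˢ Icc ((j:ℝ)-1) (j:ℝ)

/-- The left side `L_ij` of the cell `D_ij`. -/
def cellL (i j : ℕ) : Set (ℝ × ℝ) := {((i:ℝ)-1)} ×ˢ Icc ((j:ℝ)-1) (j:ℝ)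

/-- The partial order `≼` on `D`: `(u1,v1) ≼ (u2,v2)` iff `u1 ≤ u2` and `v1 ≥ v2`. -/
def prec (p q : ℝ × ℝ) : Prop := p.1 ≤ q.1 ∧ q.2 ≤ p.2

/-!
A monotone path is a chain for the product order, and `u + v` parametrizes it by a continuous
(indeed 1-Lipschitz) inverse, so monotone paths can be truncated and glued at common points. Two
consequences drive the argument. Inside a cell both curves are affine, so the free space there is
convex and comparable points are joined by a segment. And a planar crossing argument (the
horizontal gap between two paths along the antidiagonals changes sign) shows that `r↑` is monotone
for `≼`.

A monotone path from a point of `D_ij` to the top edge of `D` leaves the cell through `TR_ij`, so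
`r↑` at the point is the largest `r↑` over its exit points. Exits through `T_ij` contribute `r*`,
which by monotonicity is also a lower bound on the whole cell; exits through
`R_ij = {i} × [a, b]` above height `v` contribute at most `r↑(i, max v a)`, which is attained by
the segment to that point.
-/

open Function

open Function

def coordSum (w : ℝ × ℝ) : ℝ := w.1 + w.2

theorem continuous_coordSum : Continuous coordSum := continuous_fst.add continuous_snd

namespace IsMonPath

variable {Dε γ γ₀ γ₁ : Set (ℝ × ℝ)} {p q t z P₀ P₁ Q₀ Q₁ : ℝ × ℝ} {a b s : ℝ}

theorem le_total (h : IsMonPath Dε γ) (hp : p ∈ γ) (hq : q ∈ γ) : p ≤ q ∨ q ≤ p := by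
  have hpq := h.2.2 p hp q hq
  by_contra! hc
  simp only [Prod.le_def, not_and_or, not_le] at hc
  rcases hc with ⟨h1 | h1, h2 | h2⟩ <;> nlinarith

theorem le_iff_coordSum_le (h : IsMonPath Dε γ) (hp : p ∈ γ) (hq : q ∈ γ) :
    p ≤ q ↔ coordSum p ≤ coordSum q := by
  refine ⟨fun hpq => add_le_add hpq.1 hpq.2, fun hs => ?_⟩
  rcases h.le_total hp hq with hpq | hqp
  · exact hpq
  · have := hqp.1; have := hqp.2
    unfold coordSum at hs
    exact ⟨by linarith, by linarith⟩

theorem injOn_coordSum (h : IsMonPath Dε γ) : InjOn coordSum γ := fun _ hp _ hq hpq =>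
  le_antisymm ((h.le_iff_coordSum_le hp hq).2 hpq.le) ((h.le_iff_coordSum_le hq hp).2 hpq.ge)

theorem dist_le_dist_coordSum (h : IsMonPath Dε γ) (hp : p ∈ γ) (hq : q ∈ γ) :
    dist p q ≤ dist (coordSum p) (coordSum q) := by
  simp only [Prod.dist_eq, Real.dist_eq, coordSum]
  rcases h.le_total hp hq with hpq | hqp
  · have := hpq.1; have := hpq.2
    rw [abs_of_nonpos (by linarith), abs_of_nonpos (by linarith), abs_of_nonpos (by linarith)]
    exact max_le (by linarith) (by linarith)
  · have := hqp.1; have := hqp.2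
    rw [abs_of_nonneg (by linarith), abs_of_nonneg (by linarith), abs_of_nonneg (by linarith)]
    exact max_le (by linarith) (by linarith)

theorem continuousOn_invFunOn_coordSum (h : IsMonPath Dε γ) :
    ContinuousOn (invFunOn coordSum γ) (coordSum '' γ) := by
  refine (LipschitzOnWith.of_dist_le_mul fun s hs t ht => ?_).continuousOn (K := 1)
  simpa [invFunOn_eq hs, invFunOn_eq ht] using
    h.dist_le_dist_coordSum (invFunOn_mem hs) (invFunOn_mem ht)

theorem ordConnected_image_coordSum (h : IsMonPath Dε γ) : OrdConnected (coordSum '' γ) :=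
  (h.2.1.isPreconnected.image _ continuous_coordSum.continuousOn).ordConnected

theorem sep_coordSum_mem {I : Set ℝ} (h : IsMonPath Dε γ) (hI : OrdConnected I)
    (hne : ∃ w ∈ γ, coordSum w ∈ I) : IsMonPath Dε {w ∈ γ | coordSum w ∈ I} := by
  have hsub : {w ∈ γ | coordSum w ∈ I} ⊆ γ := sep_subset _ _
  have himage : invFunOn coordSum γ '' (coordSum '' γ ∩ I) = {w ∈ γ | coordSum w ∈ I} := by
    rw [← image_inter_preimage]
    exact h.injOn_coordSum.leftInvOn_invFunOn.image_image' inter_subset_left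
  refine ⟨hsub.trans h.1, ?_, fun a ha b hb => h.2.2 a ha.1 b hb.1⟩
  obtain ⟨w, hw, hwI⟩ := hne
  rw [← himage]
  exact ⟨⟨_, coordSum w, ⟨⟨w, hw, rfl⟩, hwI⟩, rfl⟩,
    (h.ordConnected_image_coordSum.inter hI).isPreconnected.image _
      (h.continuousOn_invFunOn_coordSum.mono inter_subset_left)⟩

theorem sep_le (h : IsMonPath Dε γ) (hz : z ∈ γ) : IsMonPath Dε {w ∈ γ | w ≤ z} := by
  have : {w ∈ γ | w ≤ z} = {w ∈ γ | coordSum w ∈ Iic (coordSum z)} :=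
    sep_ext_iff.2 fun w hw => h.le_iff_coordSum_le hw hz
  exact this ▸ h.sep_coordSum_mem ordConnected_Iic ⟨z, hz, le_refl (coordSum z)⟩

theorem sep_ge (h : IsMonPath Dε γ) (hz : z ∈ γ) : IsMonPath Dε {w ∈ γ | z ≤ w} := by
  have : {w ∈ γ | z ≤ w} = {w ∈ γ | coordSum w ∈ Ici (coordSum z)} :=
    sep_ext_iff.2 fun w hw => h.le_iff_coordSum_le hz hw
  exact this ▸ h.sep_coordSum_mem ordConnected_Ici ⟨z, hz, le_refl (coordSum z)⟩

theorem exists_exit (h : IsMonPath Dε γ) (hp : p ∈ γ) (ht : t ∈ γ) (hpa : p.1 ≤ a) (hpb : p.2 ≤ b)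
    (htb : b ≤ t.2) : ∃ z ∈ γ, p ≤ z ∧ z.1 ≤ a ∧ z.2 ≤ b ∧ (z.1 = a ∨ z.2 = b) := by
  obtain ⟨z, hz, hz0⟩ := h.2.1.isPreconnected.intermediate_value hp ht
    (f := fun w : ℝ × ℝ => max (w.1 - a) (w.2 - b)) (by fun_prop)
    (show (0 : ℝ) ∈ Icc _ _ from
      ⟨max_le (by linarith) (by linarith), le_max_of_le_right (by linarith)⟩)
  have hz0 : max (z.1 - a) (z.2 - b) = 0 := hz0
  have hza : z.1 ≤ a := by linarith [le_max_left (z.1 - a) (z.2 - b)]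
  have hzb : z.2 ≤ b := by linarith [le_max_right (z.1 - a) (z.2 - b)]
  have hside : z.1 = a ∨ z.2 = b := by
    rcases max_choice (z.1 - a) (z.2 - b) with hm | hm <;> rw [hm] at hz0
    exacts [Or.inl (by linarith), Or.inr (by linarith)]
  rcases h.le_total hp hz with hpz | hzp
  · exact ⟨z, hz, hpz, hza, hzb, hside⟩
  · refine ⟨p, hp, le_rfl, hpa, hpb, ?_⟩
    rcases hside with h1 | h2
    exacts [Or.inl (le_antisymm hpa (h1 ▸ hzp.1)), Or.inr (le_antisymm hpb (h2 ▸ hzp.2))]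

theorem exists_mem_coordSum_eq (h : IsMonPath Dε γ) (hp : p ∈ γ) (hq : q ∈ γ)
    (hs : s ∈ Icc (coordSum p) (coordSum q)) : ∃ w ∈ γ, coordSum w = s :=
  h.ordConnected_image_coordSum.out ⟨p, hp, rfl⟩ ⟨q, hq, rfl⟩ hs

theorem exists_mem_inter (h₀ : IsMonPath Dε γ₀) (h₁ : IsMonPath Dε γ₁) (hP₀ : P₀ ∈ γ₀)
    (hP₁ : P₁ ∈ γ₀) (hQ₀ : Q₀ ∈ γ₁) (hQ₁ : Q₁ ∈ γ₁) (hPQ₀ : coordSum P₀ = coordSum Q₀)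
    (hPQ₁ : coordSum P₁ = coordSum Q₁) (hP : coordSum P₀ ≤ coordSum P₁) (h₀x : P₀.1 ≤ Q₀.1)
    (h₁x : Q₁.1 ≤ P₁.1) : ∃ z ∈ γ₀ ∩ γ₁, coordSum z ∈ Icc (coordSum P₀) (coordSum P₁) := by
  set G₀ := invFunOn coordSum γ₀
  set G₁ := invFunOn coordSum γ₁
  have hI₀ : Icc (coordSum P₀) (coordSum P₁) ⊆ coordSum '' γ₀ :=
    h₀.ordConnected_image_coordSum.out ⟨P₀, hP₀, rfl⟩ ⟨P₁, hP₁, rfl⟩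
  have hI₁ : Icc (coordSum P₀) (coordSum P₁) ⊆ coordSum '' γ₁ :=
    h₁.ordConnected_image_coordSum.out ⟨Q₀, hQ₀, hPQ₀.symm⟩ ⟨Q₁, hQ₁, hPQ₁.symm⟩
  have hG₀ : G₀ (coordSum P₀) = P₀ ∧ G₀ (coordSum P₁) = P₁ :=
    ⟨h₀.injOn_coordSum.leftInvOn_invFunOn hP₀, h₀.injOn_coordSum.leftInvOn_invFunOn hP₁⟩
  have hG₁ : G₁ (coordSum P₀) = Q₀ ∧ G₁ (coordSum P₁) = Q₁ := by
    rw [hPQ₀, hPQ₁]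
    exact ⟨h₁.injOn_coordSum.leftInvOn_invFunOn hQ₀, h₁.injOn_coordSum.leftInvOn_invFunOn hQ₁⟩
  obtain ⟨s, hs, hδs⟩ := intermediate_value_Icc' hP
    ((continuous_fst.comp_continuousOn (h₁.continuousOn_invFunOn_coordSum.mono hI₁)).sub
      (continuous_fst.comp_continuousOn (h₀.continuousOn_invFunOn_coordSum.mono hI₀)))
    (show (0 : ℝ) ∈ Icc ((G₁ (coordSum P₁)).1 - (G₀ (coordSum P₁)).1)
        ((G₁ (coordSum P₀)).1 - (G₀ (coordSum P₀)).1) by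
      rw [hG₀.1, hG₀.2, hG₁.1, hG₁.2]; constructor <;> linarith)
  have hG₀s : G₀ s ∈ γ₀ ∧ coordSum (G₀ s) = s := ⟨invFunOn_mem (hI₀ hs), invFunOn_eq (hI₀ hs)⟩
  have hG₁s : G₁ s ∈ γ₁ ∧ coordSum (G₁ s) = s := ⟨invFunOn_mem (hI₁ hs), invFunOn_eq (hI₁ hs)⟩
  have hfst : (G₀ s).1 = (G₁ s).1 := by
    change (G₁ s).1 - (G₀ s).1 = 0 at hδs
    linarith
  have hGs : G₀ s = G₁ s := Prod.ext hfst (by unfold coordSum at hG₀s hG₁s; linarith)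
  exact ⟨G₀ s, ⟨hG₀s.1, hGs ▸ hG₁s.1⟩, hG₀s.2.symm ▸ hs⟩

end IsMonPath

namespace Reach

variable {Dε : Set (ℝ × ℝ)} {p q z A B D : ℝ × ℝ}

theorem trans_of_le (hpz : Reach Dε p z) (hzq : Reach Dε z q) (h₁ : p ≤ z) (h₂ : z ≤ q) :
    Reach Dε p q := by
  obtain ⟨γ₀, h₀, hp, hz₀⟩ := hpz
  obtain ⟨γ₁, h₁', hz₁, hq⟩ := hzq
  refine ⟨{w ∈ γ₀ | w ≤ z} ∪ {w ∈ γ₁ | z ≤ w}, ⟨?_, ?_, ?_⟩, Or.inl ⟨hp, h₁⟩, Or.inr ⟨hq, h₂⟩⟩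
  · exact union_subset ((h₀.sep_le hz₀).1) ((h₁'.sep_ge hz₁).1)
  · exact IsConnected.union ⟨z, ⟨hz₀, le_rfl⟩, ⟨hz₁, le_rfl⟩⟩ (h₀.sep_le hz₀).2.1
      (h₁'.sep_ge hz₁).2.1
  · rintro a (ha | ha) b (hb | hb)
    · exact h₀.2.2 a ha.1 b hb.1
    · have := ha.2.trans hb.2; nlinarith [this.1, this.2]
    · have := hb.2.trans ha.2; nlinarith [this.1, this.2]
    · exact h₁'.2.2 a ha.1 b hb.1

theorem of_crossing (hAB : Reach Dε A B) (hqD : Reach Dε q D) (hAB' : A ≤ B) (hqD' : q ≤ D)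
    (hAq : prec A q) (hDB : D.1 ≤ B.1) (hBD : B.2 = D.2) : Reach Dε q B := by
  obtain ⟨γ₀, h₀, hA, hB⟩ := hAB
  obtain ⟨γ₁, h₁, hq, hD⟩ := hqD
  have hlo : max (coordSum A) (coordSum q) ≤ coordSum D :=
    max_le (by unfold coordSum; linarith [hAq.1, hqD'.1, hAB'.2]) (add_le_add hqD'.1 hqD'.2)
  have hDB' : coordSum D ≤ coordSum B := by unfold coordSum; linarith
  obtain ⟨P₀, hP₀, hP₀s⟩ := h₀.exists_mem_coordSum_eq hA hB
    ⟨le_max_left _ _, hlo.trans hDB'⟩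
  obtain ⟨Q₀, hQ₀, hQ₀s⟩ := h₁.exists_mem_coordSum_eq hq hD ⟨le_max_right _ _, hlo⟩
  obtain ⟨P₁, hP₁, hP₁s⟩ := h₀.exists_mem_coordSum_eq hA hB
    ⟨(le_max_left _ _).trans hlo, hDB'⟩
  have hAP₀ := (h₀.le_iff_coordSum_le hA hP₀).2 (hP₀s ▸ le_max_left _ _)
  have hqQ₀ := (h₁.le_iff_coordSum_le hq hQ₀).2 (hQ₀s ▸ le_max_right _ _)
  have hP₁B := (h₀.le_iff_coordSum_le hP₁ hB).2 (hP₁s ▸ hDB')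
  have h₀x : P₀.1 ≤ Q₀.1 := by
    have hm := max_choice (coordSum A) (coordSum q)
    unfold coordSum at hP₀s hQ₀s hm
    rcases hm with hm | hm <;> linarith [hAP₀.1, hAP₀.2, hqQ₀.1, hqQ₀.2, hAq.1, hAq.2]
  have h₁x : D.1 ≤ P₁.1 := by unfold coordSum at hP₁s; linarith [hP₁B.2]
  obtain ⟨z, ⟨hz₀, hz₁⟩, hzs⟩ := h₀.exists_mem_inter h₁ hP₀ hP₁ hQ₀ hD (hP₀s.trans hQ₀s.symm)
    hP₁s (hP₀s ▸ hP₁s ▸ hlo) h₀x h₁x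
  refine trans_of_le ⟨γ₁, h₁, hq, hz₁⟩ ⟨γ₀, h₀, hz₀, hB⟩ ?_ ?_
  · exact (h₁.le_iff_coordSum_le hq hz₁).2 ((le_max_right _ _).trans (hP₀s ▸ hzs.1))
  · exact (h₀.le_iff_coordSum_le hz₀ hB).2 (hzs.2.trans (hP₁s ▸ hDB'))

end Reach

section Pointer

variable {m n : ℕ} {Dε : Set (ℝ × ℝ)} {p q z : ℝ × ℝ} {u β : ℝ}

theorem exists_reach_top_of_mem_gUp (hp : p ∈ gUp m n Dε) :
    ∃ u ∈ Icc 0 (2 * (m : ℝ)), Reach Dε p (u, n) := by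
  obtain ⟨-, ⟨u, v⟩, ⟨hu, hv : v = n⟩, hr⟩ := hp
  exact ⟨u, hu, hv ▸ hr⟩

theorem le_rUp (hu : u ∈ Icc 0 (2 * (m : ℝ))) (hr : Reach Dε p (u, n)) : u ≤ rUp m n Dε p :=
  le_csSup ⟨2 * m, fun _ hv => hv.1.2⟩ ⟨hu, hr⟩

theorem rUp_le (hp : p ∈ gUp m n Dε)
    (h : ∀ u ∈ Icc 0 (2 * (m : ℝ)), Reach Dε p (u, n) → u ≤ β) : rUp m n Dε p ≤ β := by
  obtain ⟨u, hu, hr⟩ := exists_reach_top_of_mem_gUp hp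
  exact csSup_le ⟨u, hu, hr⟩ fun v hv => h v hv.1 hv.2

theorem exists_reach_top_ge (hD : Dε ⊆ Dfull m n) (hp : p ∈ Dε) (hu : u ∈ Icc 0 (2 * (m : ℝ)))
    (hr : Reach Dε p (u, n)) :
    ∃ u' ∈ Icc 0 (2 * (m : ℝ)), u ≤ u' ∧ Reach Dε p (u', n) ∧ p ≤ (u', (n : ℝ)) := by
  obtain ⟨γ, hγ, hpγ, huγ⟩ := hr
  rcases hγ.le_total hpγ huγ with hle | hle
  · exact ⟨u, hu, le_rfl, ⟨γ, hγ, hpγ, huγ⟩, hle⟩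
  · have hpD := hD hp
    have hpn : p = (p.1, (n : ℝ)) := Prod.ext rfl (le_antisymm hpD.2.2 hle.2)
    exact ⟨p.1, hpD.1, hle.1, ⟨γ, hγ, hpγ, hpn ▸ hpγ⟩, hpn.le⟩

theorem rUp_le_rUp_of_reach (hD : Dε ⊆ Dfull m n) (hz : z ∈ gUp m n Dε) (hr : Reach Dε p z)
    (hpz : p ≤ z) : rUp m n Dε z ≤ rUp m n Dε p :=
  rUp_le hz fun _ hu hzu => by
    obtain ⟨u', hu', huu', hzu', hzle⟩ := exists_reach_top_ge hD hz.1 hu hzu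
    exact huu'.trans (le_rUp hu' (hr.trans_of_le hzu' hpz hzle))

theorem rUp_le_rUp_of_prec (hD : Dε ⊆ Dfull m n) (hz : z ∈ gUp m n Dε) (hq : q ∈ gUp m n Dε)
    (hzq : prec z q) : rUp m n Dε z ≤ rUp m n Dε q := by
  obtain ⟨d, hd, hqd⟩ := exists_reach_top_of_mem_gUp hq
  obtain ⟨d', hd', -, hqd', hqd''⟩ := exists_reach_top_ge hD hq.1 hd hqd
  refine rUp_le hz fun u hu hzu => ?_
  obtain ⟨u', hu', huu', hzu', hzle⟩ := exists_reach_top_ge hD hz.1 hu hzu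
  rcases le_total u' d' with hud | hdu
  · exact huu'.trans (hud.trans (le_rUp hd' hqd'))
  · exact huu'.trans (le_rUp hu' (hzu'.of_crossing hqd' hzle hqd'' hzq hdu rfl))

end Pointer

theorem Convex.reach_of_le {Dε S : Set (ℝ × ℝ)} {p q : ℝ × ℝ} (hS : Convex ℝ S) (hSD : S ⊆ Dε)
    (hp : p ∈ S) (hq : q ∈ S) (hpq : p ≤ q) : Reach Dε p q := by
  refine ⟨segment ℝ p q, ⟨(hS.segment_subset hp hq).trans hSD,
    (convex_segment p q).isConnected ⟨p, left_mem_segment ℝ p q⟩, ?_⟩,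
    left_mem_segment ℝ p q, right_mem_segment ℝ p q⟩
  rw [segment_eq_image']
  rintro _ ⟨s, -, rfl⟩ _ ⟨t, -, rfl⟩
  have key : ((p + s • (q - p)).1 - (p + t • (q - p)).1) *
      ((p + s • (q - p)).2 - (p + t • (q - p)).2) = (s - t) ^ 2 * ((q.1 - p.1) * (q.2 - p.2)) := by
    simp only [Prod.fst_add, Prod.snd_add, Prod.smul_fst, Prod.smul_snd, Prod.fst_sub,
      Prod.snd_sub, smul_eq_mul]
    ring
  rw [key]
  exact mul_nonneg (sq_nonneg _) (mul_nonneg (sub_nonneg.2 hpq.1) (sub_nonneg.2 hpq.2))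

section Curves

variable {k : ℕ}

theorem fCurve_natCast (f : ℕ → EuclideanSpace ℝ (Fin k)) (l : ℕ) : fCurve f l = f l := by
  simp [fCurve]

theorem exists_affineMap_eqOn_fCurve (f : ℕ → EuclideanSpace ℝ (Fin k)) {l : ℕ} (hl : 1 ≤ l) :
    ∃ φ : ℝ →ᵃ[ℝ] EuclideanSpace ℝ (Fin k), EqOn (fCurve f) φ (Icc ((l : ℝ) - 1) l) := by
  refine ⟨(AffineMap.lineMap (f (l - 1)) (f l)).comp
    (AffineEquiv.constVAdd ℝ ℝ (1 - (l : ℝ))).toAffineMap, fun v hv => ?_⟩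
  simp only [AffineMap.coe_comp, comp_apply, AffineEquiv.coe_toAffineMap,
    AffineEquiv.constVAdd_apply, vadd_eq_add]
  rcases hv.2.eq_or_lt with rfl | hlt
  · simp [fCurve_natCast]
  · have hfloor : ⌊v⌋ = (l : ℤ) - 1 := by
      rw [Int.floor_eq_iff]; push_cast; constructor <;> linarith [hv.1]
    have hfract : Int.fract v = 1 - l + v := by
      rw [Int.fract, hfloor]; push_cast; ring
    rw [fCurve, hfract, hfloor, AffineMap.lineMap_apply_module,
      show ((l : ℤ) - 1).toNat = l - 1 by omega, Nat.sub_add_cancel hl]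

theorem fCurveExt_eq_fCurve_sub {m : ℕ} {x : ℕ → EuclideanSpace ℝ (Fin k)} (hx : x m = x 0)
    {u : ℝ} (hu : m ≤ u) : fCurveExt m x u = fCurve x (u - m) := by
  rw [fCurveExt]
  split_ifs with hum
  · rw [le_antisymm hum hu, sub_self, fCurve_natCast, hx]
    simpa using (fCurve_natCast x 0).symm
  · rfl

theorem exists_affineMap_eqOn_fCurveExt {m : ℕ} {x : ℕ → EuclideanSpace ℝ (Fin k)}
    (hx : x m = x 0) {i : ℕ} (hi : 1 ≤ i) :
    ∃ φ : ℝ →ᵃ[ℝ] EuclideanSpace ℝ (Fin k), EqOn (fCurveExt m x) φ (Icc ((i : ℝ) - 1) i) := by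
  rcases le_or_gt i m with him | hmi
  · obtain ⟨φ, hφ⟩ := exists_affineMap_eqOn_fCurve x hi
    refine ⟨φ, fun u hu => ?_⟩
    rw [fCurveExt, if_pos (hu.2.trans (by exact_mod_cast him))]
    exact hφ hu
  · obtain ⟨φ, hφ⟩ := exists_affineMap_eqOn_fCurve x (l := i - m) (by omega)
    refine ⟨φ.comp (AffineEquiv.constVAdd ℝ ℝ (-(m : ℝ))).toAffineMap, fun u hu => ?_⟩
    have hcast : ((i - m : ℕ) : ℝ) = i - m := by rw [Nat.cast_sub hmi.le]
    have hmi' : (m : ℝ) + 1 ≤ i := by exact_mod_cast hmi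
    rw [fCurveExt_eq_fCurve_sub hx (by linarith [hu.1]),
      hφ ⟨by linarith [hu.1], by linarith [hu.2]⟩]
    simp [sub_eq_neg_add]

end Curves

theorem convex_Dfree_inter_cellD {k m n : ℕ} {x y : ℕ → EuclideanSpace ℝ (Fin k)} {ε : ℝ}
    (hx : x m = x 0) {i j : ℕ} (hi : 1 ≤ i) (hj : 1 ≤ j) :
    Convex ℝ (Dfree m n x y ε ∩ cellD i j) := by
  obtain ⟨φ, hφ⟩ := exists_affineMap_eqOn_fCurveExt hx hi
  obtain ⟨ψ, hψ⟩ := exists_affineMap_eqOn_fCurve y hj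
  have hset : Dfree m n x y ε ∩ cellD i j = (Dfull m n ∩ cellD i j) ∩
      (φ.comp (AffineMap.fst : ℝ × ℝ →ᵃ[ℝ] ℝ) - ψ.comp (AffineMap.snd : ℝ × ℝ →ᵃ[ℝ] ℝ)) ⁻¹'
        Metric.closedBall 0 ε := by
    ext w
    simp only [Dfree, mem_inter_iff, mem_sep_iff, mem_preimage, mem_closedBall_zero_iff,
      AffineMap.coe_sub, AffineMap.coe_comp, Pi.sub_apply, comp_apply,
      AffineMap.coe_fst, AffineMap.coe_snd, ← dist_eq_norm]
    constructor
    · rintro ⟨⟨hwD, hwε⟩, hwC⟩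
      exact ⟨⟨hwD, hwC⟩, by rwa [← hφ hwC.1, ← hψ hwC.2]⟩
    · rintro ⟨⟨hwD, hwC⟩, hwε⟩
      exact ⟨⟨hwD, by rwa [hφ hwC.1, hψ hwC.2]⟩, hwC⟩
  rw [hset]
  have hbox : Convex ℝ (Dfull m n ∩ cellD i j) :=
    ((convex_Icc _ _).prod (convex_Icc _ _)).inter ((convex_Icc _ _).prod (convex_Icc _ _))
  exact hbox.inter ((convex_closedBall _ _).affine_preimage _)

section Cell

variable {m n i j : ℕ} {Dε : Set (ℝ × ℝ)} {p z : ℝ × ℝ} {r w β : ℝ}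

theorem cellT_subset_cellD : cellT i j ⊆ cellD i j :=
  prod_mono subset_rfl (singleton_subset_iff.2 (right_mem_Icc.2 (sub_le_self _ zero_le_one)))

theorem cellB_subset_cellD : cellB i j ⊆ cellD i j :=
  prod_mono subset_rfl (singleton_subset_iff.2 (left_mem_Icc.2 (sub_le_self _ zero_le_one)))

theorem cellR_subset_cellD : cellR i j ⊆ cellD i j :=
  prod_mono (singleton_subset_iff.2 (right_mem_Icc.2 (sub_le_self _ zero_le_one))) subset_rfl

theorem cellL_subset_cellD : cellL i j ⊆ cellD i j :=
  prod_mono (singleton_subset_iff.2 (left_mem_Icc.2 (sub_le_self _ zero_le_one))) subset_rfl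

theorem rUp_le_of_forall_cellT_union_cellR (hjn : (j : ℝ) ≤ n)
    (hp : p ∈ gUp m n Dε ∩ cellD i j)
    (hβ : ∀ z ∈ gUp m n Dε ∩ (cellT i j ∪ cellR i j), p.2 ≤ z.2 → rUp m n Dε z ≤ β) :
    rUp m n Dε p ≤ β := by
  refine rUp_le hp.1 fun u hu ⟨γ, hγ, hpγ, huγ⟩ => ?_
  obtain ⟨⟨hpi, hpi'⟩, hpj, hpj'⟩ := hp.2
  obtain ⟨z, hz, hpz, hzi, hzj, hside⟩ := hγ.exists_exit hpγ huγ hpi' hpj' hjn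
  have hzu : Reach Dε z (u, n) := ⟨γ, hγ, hz, huγ⟩
  have hzTR : z ∈ cellT i j ∪ cellR i j := by
    rcases hside with h | h
    · exact Or.inr ⟨h, hpj.trans hpz.2, hzj⟩
    · exact Or.inl ⟨⟨hpi.trans hpz.1, hzi⟩, h⟩
  exact (le_rUp hu hzu).trans (hβ z ⟨⟨hγ.1 hz, (u, n), ⟨hu, rfl⟩, hzu⟩, hzTR⟩ hpz.2)

theorem rUp_le_rUp_of_le_of_mem_cellD (hD : Dε ⊆ Dfull m n) (hcvx : Convex ℝ (Dε ∩ cellD i j))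
    {q : ℝ × ℝ} (hp : p ∈ gUp m n Dε ∩ cellD i j) (hq : q ∈ gUp m n Dε ∩ cellD i j)
    (hpq : p ≤ q) : rUp m n Dε q ≤ rUp m n Dε p :=
  rUp_le_rUp_of_reach hD hq.1
    (hcvx.reach_of_le inter_subset_left ⟨hp.1.1, hp.2⟩ ⟨hq.1.1, hq.2⟩ hpq) hpq

theorem rUp_le_rUp_of_mem_cellT (hD : Dε ⊆ Dfull m n) (hcvx : Convex ℝ (Dε ∩ cellD i j))
    (hz : z ∈ gUp m n Dε ∩ cellT i j) (hp : p ∈ gUp m n Dε ∩ cellD i j) :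
    rUp m n Dε z ≤ rUp m n Dε p := by
  have hzj : z.2 = j := hz.2.2
  rcases le_total p.1 z.1 with hpz | hzp
  · exact rUp_le_rUp_of_le_of_mem_cellD hD hcvx hp ⟨hz.1, cellT_subset_cellD hz.2⟩
      ⟨hpz, hzj ▸ hp.2.2.2⟩
  · exact rUp_le_rUp_of_prec hD hz.1 hp.1 ⟨hzp, hzj ▸ hp.2.2.2⟩

theorem rUp_eq_of_forall_cellR_lt (hD : Dε ⊆ Dfull m n) (hcvx : Convex ℝ (Dε ∩ cellD i j))
    (hjn : (j : ℝ) ≤ n) (hT : (gUp m n Dε ∩ cellT i j).Nonempty)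
    (hconst : ∀ z ∈ gUp m n Dε ∩ cellT i j, rUp m n Dε z = r)
    (hp : p ∈ gUp m n Dε ∩ cellD i j) (hR : ∀ z ∈ gUp m n Dε ∩ cellR i j, z.2 < p.2) :
    rUp m n Dε p = r := by
  refine le_antisymm (rUp_le_of_forall_cellT_union_cellR hjn hp ?_) ?_
  · rintro z ⟨hz, hzT | hzR⟩ hpz
    exacts [(hconst z ⟨hz, hzT⟩).le, absurd hpz (hR z ⟨hz, hzR⟩).not_ge]
  · obtain ⟨z₀, hz₀⟩ := hT
    exact hconst z₀ hz₀ ▸ rUp_le_rUp_of_mem_cellT hD hcvx hz₀ hp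

theorem rUp_eq_rUp_of_forall_cellR_le (hD : Dε ⊆ Dfull m n) (hcvx : Convex ℝ (Dε ∩ cellD i j))
    (hjn : (j : ℝ) ≤ n) (hp : p ∈ gUp m n Dε ∩ cellD i j)
    (hw : ((i : ℝ), w) ∈ gUp m n Dε ∩ cellR i j) (hpw : p ≤ ((i : ℝ), w))
    (hR : ∀ z ∈ gUp m n Dε ∩ cellR i j, p.2 ≤ z.2 → w ≤ z.2) :
    rUp m n Dε p = rUp m n Dε ((i : ℝ), w) := by
  have hwD : ((i : ℝ), w) ∈ gUp m n Dε ∩ cellD i j := ⟨hw.1, cellR_subset_cellD hw.2⟩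
  refine le_antisymm (rUp_le_of_forall_cellT_union_cellR hjn hp ?_)
    (rUp_le_rUp_of_le_of_mem_cellD hD hcvx hp hwD hpw)
  rintro z ⟨hz, hzT | hzR⟩ hpz
  · exact rUp_le_rUp_of_mem_cellT hD hcvx ⟨hz, hzT⟩ hwD
  · exact rUp_le_rUp_of_prec hD hz hw.1 ⟨hzR.1.le, hR z ⟨hz, hzR⟩ hpz⟩

end Cell

theorem stmt16_general
    (k m n : ℕ)
    (x y : ℕ → EuclideanSpace ℝ (Fin k)) (hx : x m = x 0)
    (ε : ℝ)
    (Dε : Set (ℝ × ℝ)) (hDε : Dε = Dfree m n x y ε)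
    (i j : ℕ) (hi1 : 1 ≤ i) (hj1 : 1 ≤ j) (hj2 : j ≤ n)
    (rstar : ℝ)
    (hT : (gUp m n Dε ∩ cellT i j).Nonempty)
    (hconst : ∀ p ∈ gUp m n Dε ∩ cellT i j, rUp m n Dε p = rstar) :
    ((gUp m n Dε ∩ cellR i j = ∅ →
        ∀ p ∈ gUp m n Dε ∩ (cellL i j ∪ cellB i j), rUp m n Dε p = rstar) ∧
      (∀ a b : ℝ, a ≤ b →
        gUp m n Dε ∩ cellR i j = {(i:ℝ)} ×ˢ Icc a b →
        ((∀ v : ℝ, ((i:ℝ)-1, v) ∈ gUp m n Dε ∩ cellL i j →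
            (b < v → rUp m n Dε ((i:ℝ)-1, v) = rstar) ∧
            (a < v → v ≤ b → rUp m n Dε ((i:ℝ)-1, v) = rUp m n Dε ((i:ℝ), v)) ∧
            (v ≤ a → rUp m n Dε ((i:ℝ)-1, v) = rUp m n Dε ((i:ℝ), a))) ∧
          (∀ u : ℝ, (u, (j:ℝ)-1) ∈ gUp m n Dε ∩ cellB i j →
            rUp m n Dε (u, (j:ℝ)-1) = rUp m n Dε ((i:ℝ), a))))) := by
  have hD : Dε ⊆ Dfull m n := hDε ▸ sep_subset _ _
  have hcvx : Convex ℝ (Dε ∩ cellD i j) := hDε ▸ convex_Dfree_inter_cellD hx hi1 hj1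
  have hjn : (j : ℝ) ≤ n := by exact_mod_cast hj2
  have hL : ∀ {p}, p ∈ gUp m n Dε ∩ cellL i j → p ∈ gUp m n Dε ∩ cellD i j :=
    fun hp => ⟨hp.1, cellL_subset_cellD hp.2⟩
  have hB : ∀ {p}, p ∈ gUp m n Dε ∩ cellB i j → p ∈ gUp m n Dε ∩ cellD i j :=
    fun hp => ⟨hp.1, cellB_subset_cellD hp.2⟩
  refine ⟨fun hR p ⟨hp, hpLB⟩ => ?_, fun a b hab hR => ?_⟩
  · refine rUp_eq_of_forall_cellR_lt hD hcvx hjn hT hconst ?_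
      fun z hz => absurd (hR ▸ hz) (notMem_empty z)
    rcases hpLB with hpL | hpB
    exacts [hL ⟨hp, hpL⟩, hB ⟨hp, hpB⟩]
  have hRab : ∀ z ∈ gUp m n Dε ∩ cellR i j, z.2 ∈ Icc a b := fun z hz => (hR ▸ hz).2
  have hiR : ∀ w ∈ Icc a b, ((i : ℝ), w) ∈ gUp m n Dε ∩ cellR i j := fun w hw => hR ▸ ⟨rfl, hw⟩
  have hia := hiR a ⟨le_rfl, hab⟩
  have hi : (i : ℝ) - 1 ≤ i := sub_le_self _ zero_le_one
  refine ⟨fun v hv => ⟨fun hbv => ?_, fun hav hvb => ?_, fun hva => ?_⟩, fun u hu => ?_⟩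
  · exact rUp_eq_of_forall_cellR_lt hD hcvx hjn hT hconst (hL hv)
      fun z hz => (hRab z hz).2.trans_lt hbv
  · exact rUp_eq_rUp_of_forall_cellR_le hD hcvx hjn (hL hv) (hiR v ⟨hav.le, hvb⟩) ⟨hi, le_rfl⟩
      fun _ _ h => h
  · exact rUp_eq_rUp_of_forall_cellR_le hD hcvx hjn (hL hv) hia ⟨hi, hva⟩
      fun z hz _ => (hRab z hz).1
  · exact rUp_eq_rUp_of_forall_cellR_le hD hcvx hjn (hB hu) hia ⟨hu.2.1.2, hia.2.2.1⟩
      fun z hz _ => (hRab z hz).1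

theorem stmt16
    (k m n : ℕ) (hk : 1 ≤ k) (hm : 1 ≤ m) (hn : 1 ≤ n)
    (x y : ℕ → EuclideanSpace ℝ (Fin k)) (hx : x m = x 0) (hy : y n = y 0)
    (ε : ℝ) (hε : 0 ≤ ε)
    (Dε : Set (ℝ × ℝ)) (hDε : Dε = Dfree m n x y ε)
    (i j : ℕ) (hi1 : 1 ≤ i) (hi2 : i ≤ 2*m) (hj1 : 1 ≤ j) (hj2 : j ≤ n)
    (rstar : ℝ)
    (hT : (gUp m n Dε ∩ cellT i j).Nonempty)
    (hconst : ∀ p ∈ gUp m n Dε ∩ cellT i j, rUp m n Dε p = rstar) :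
    ((gUp m n Dε ∩ cellR i j = ∅ →
        ∀ p ∈ gUp m n Dε ∩ (cellL i j ∪ cellB i j), rUp m n Dε p = rstar) ∧
      (∀ a b : ℝ, a ≤ b →
        gUp m n Dε ∩ cellR i j = {(i:ℝ)} ×ˢ Icc a b →
        ((∀ v : ℝ, ((i:ℝ)-1, v) ∈ gUp m n Dε ∩ cellL i j →
            (b < v → rUp m n Dε ((i:ℝ)-1, v) = rstar) ∧
            (a < v → v ≤ b → rUp m n Dε ((i:ℝ)-1, v) = rUp m n Dε ((i:ℝ), v)) ∧
            (v ≤ a → rUp m n Dε ((i:ℝ)-1, v) = rUp m n Dε ((i:ℝ), a))) ∧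
          (∀ u : ℝ, (u, (j:ℝ)-1) ∈ gUp m n Dε ∩ cellB i j →
            rUp m n Dε (u, (j:ℝ)-1) = rUp m n Dε ((i:ℝ), a))))) :=
  stmt16_general k m n x y hx ε Dε hDε i j hi1 hj1 hj2 rstar hT hconst
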